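/- arXiv:0806.4916 — 7 statements merged into one kernel-verified Lean document; each statement's English description precedes it below -/
import Mathlib

section
/- Let V be a finite-dimensional vector space over ℚ, L a full-dimensional lattice of V, and U ⊆ W two ℚ-subspaces of V. Then there exist subspaces U' and W' of V such that W' ⊆ U', U ⊕ U' = V = W ⊕ W', and (L ∩ U) + (L ∩ U') = L = (L ∩ W) + (L ∩ W'). -/
open Submodule

/-- Denominator-clearing: elements of the ℚ-span of a ℤ-submodule. -/
lemma aux_smul {V : Type*} [AddCommGroup V] [Module ℚ V] (M : Submodule ℤ V) {x : V}
    (hx : x ∈ Submodule.span ℚ (M : Set V)) : ∃ n : ℤ, n ≠ 0 ∧ n • x ∈ M := by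
  induction hx using Submodule.span_induction with
  | mem x h => exact ⟨1, one_ne_zero, by simpa using h⟩
  | zero => exact ⟨1, one_ne_zero, by simp⟩
  | add x y _ _ hx hy =>
      obtain ⟨n, hn, hnx⟩ := hx
      obtain ⟨m, hm, hmy⟩ := hy
      refine ⟨n * m, mul_ne_zero hn hm, ?_⟩
      rw [smul_add]
      exact add_mem (by rw [mul_comm, mul_smul]; exact M.smul_mem m hnx)
        (by rw [mul_smul]; exact M.smul_mem n hmy)
  | smul q x _ hx =>
      obtain ⟨n, hn, hnx⟩ := hx
      refine ⟨(q.den : ℤ) * n, mul_ne_zero (by exact_mod_cast q.den_ne_zero) hn, ?_⟩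
      have key : (((q.den : ℤ) * n : ℤ) : ℚ) * q = (((q.num * n : ℤ)) : ℚ) := by
        push_cast
        linear_combination (n : ℚ) * (Rat.mul_den_eq_num q)
      have : ((q.den : ℤ) * n) • q • x = (q.num * n) • x := by
        rw [← Int.cast_smul_eq_zsmul ℚ, smul_smul, key, Int.cast_smul_eq_zsmul]
      rw [this, mul_smul]
      exact M.smul_mem _ hnx

lemma aux_span {V : Type*} [AddCommGroup V] [Module ℚ V] (M : Submodule ℤ V)
    (S : Submodule ℚ V) (h : S ≤ Submodule.span ℚ (M : Set V)) :
    Submodule.span ℚ ((M ⊓ S.restrictScalars ℤ : Submodule ℤ V) : Set V) = S := by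
  apply le_antisymm
  · rw [Submodule.span_le]
    intro x hx
    exact hx.2
  · intro x hx
    obtain ⟨n, hn, hnx⟩ := aux_smul M (h hx)
    have hnxS : n • x ∈ S.restrictScalars ℤ := Submodule.smul_mem _ n hx
    have : x = ((n : ℚ)⁻¹) • (n • x) := by
      rw [← Int.cast_smul_eq_zsmul ℚ, smul_smul, inv_mul_cancel₀ (by exact_mod_cast hn),
        one_smul]
    rw [this]
    exact Submodule.smul_mem _ _ (Submodule.subset_span ⟨hnx, hnxS⟩)

lemma aux_compl_of_proj {R M : Type*} [Ring R] [AddCommGroup M] [Module R M]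
    (N : Submodule R M) [Module.Projective R (M ⧸ N)] : ∃ C, IsCompl N C := by
  obtain ⟨s, hs⟩ := Module.projective_lifting_property N.mkQ LinearMap.id N.mkQ_surjective
  refine ⟨LinearMap.range s, ⟨?_, ?_⟩⟩
  · rw [disjoint_iff]
    ext x
    simp only [Submodule.mem_inf, Submodule.mem_bot, LinearMap.mem_range]
    constructor
    · rintro ⟨hxN, y, rfl⟩
      have : N.mkQ (s y) = y := by
        have := congrArg (fun f => f y) hs
        simpa using this
      have hy0 : y = 0 := by
        rw [← this, Submodule.mkQ_apply, Submodule.Quotient.mk_eq_zero]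
        exact hxN
      rw [hy0, map_zero]
    · rintro rfl
      exact ⟨N.zero_mem, 0, map_zero s⟩
  · rw [codisjoint_iff, eq_top_iff]
    intro m _
    have hmem : m - s (N.mkQ m) ∈ N := by
      rw [← Submodule.Quotient.mk_eq_zero, Submodule.Quotient.mk_sub]
      have : N.mkQ (s (N.mkQ m)) = N.mkQ m := by
        have := congrArg (fun f => f (N.mkQ m)) hs
        simpa using this
      rw [← Submodule.mkQ_apply, ← Submodule.mkQ_apply, this, sub_self]
    have : m = (m - s (N.mkQ m)) + s (N.mkQ m) := by abel
    rw [this]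
    exact Submodule.add_mem_sup hmem ⟨N.mkQ m, rfl⟩

lemma aux_sup {V : Type*} [AddCommGroup V] [Module ℚ V] (X Y : Submodule ℤ V) :
    Submodule.span ℚ ((X ⊔ Y : Submodule ℤ V) : Set V)
      = Submodule.span ℚ (X : Set V) ⊔ Submodule.span ℚ (Y : Set V) := by
  apply le_antisymm
  · rw [Submodule.span_le]
    intro x hx
    obtain ⟨a, ha, b, hb, rfl⟩ := Submodule.mem_sup.mp hx
    exact Submodule.add_mem_sup (Submodule.subset_span ha) (Submodule.subset_span hb)
  · refine sup_le (Submodule.span_mono ?_) (Submodule.span_mono ?_)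
    · exact fun x hx => Submodule.mem_sup_left hx
    · exact fun x hx => Submodule.mem_sup_right hx

lemma aux_compl {V : Type*} [AddCommGroup V] [Module ℚ V] (M : Submodule ℤ V) (hM : M.FG)
    (S : Submodule ℚ V) :
    ∃ C : Submodule ℤ V, C ≤ M ∧ (M ⊓ S.restrictScalars ℤ) ⊓ C = ⊥ ∧
      (M ⊓ S.restrictScalars ℤ) ⊔ C = M := by
  haveI : Module.Finite ℤ M := Module.Finite.iff_fg.mpr hM
  set N : Submodule ℤ M := Submodule.comap M.subtype (S.restrictScalars ℤ) with hN
  haveI : NoZeroSMulDivisors ℤ (M ⧸ N) := by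
    constructor
    rintro n x h
    by_cases hn : n = 0
    · exact Or.inl hn
    · right
      obtain ⟨x, rfl⟩ := N.mkQ_surjective x
      rw [← map_smul, Submodule.mkQ_apply, Submodule.Quotient.mk_eq_zero] at h
      have hxv : (n : ℤ) • (x : V) ∈ S := h
      have : (x : V) ∈ S := by
        have : (x : V) = ((n : ℚ)⁻¹) • ((n : ℤ) • (x : V)) := by
          rw [← Int.cast_smul_eq_zsmul ℚ, smul_smul,
            inv_mul_cancel₀ (by exact_mod_cast hn), one_smul]
        rw [this]
        exact S.smul_mem _ hxv
      rw [Submodule.mkQ_apply, Submodule.Quotient.mk_eq_zero]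
      exact this
  haveI : Module.Projective ℤ (M ⧸ N) := inferInstance
  obtain ⟨P, hP⟩ := aux_compl_of_proj N
  have hMS : M ⊓ S.restrictScalars ℤ = N.map M.subtype := by
    rw [hN, Submodule.map_comap_subtype]
  refine ⟨P.map M.subtype, Submodule.map_subtype_le M P, ?_, ?_⟩
  · rw [hMS, ← Submodule.map_inf _ M.injective_subtype, hP.inf_eq_bot, Submodule.map_bot]
  · rw [hMS, ← Submodule.map_sup, hP.sup_eq_top, Submodule.map_top, Submodule.range_subtype]

lemma aux_fg_of_le {V : Type*} [AddCommGroup V] [Module ℚ V] {L B : Submodule ℤ V}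
    (hLfg : L.FG) (h : B ≤ L) : B.FG := by
  haveI : IsNoetherian ℤ L := isNoetherian_of_fg_of_noetherian L hLfg
  have h1 : (Submodule.comap L.subtype B).FG := IsNoetherian.noetherian _
  have h2 : B = (Submodule.comap L.subtype B).map L.subtype := by
    rw [Submodule.map_comap_subtype, inf_eq_right.mpr h]
  rw [h2]
  exact h1.map _

set_option maxHeartbeats 1000000 in
/-- Let `V` be a finite-dimensional vector space over `ℚ`, `L` a
full-dimensional lattice of `V` (a finitely generated `ℤ`-submodule spanning `V` over `ℚ`),
and `U ⊆ W` two `ℚ`-subspaces of `V`.  Then there exist subspaces `U'` and `W'` of `V` such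
that `W' ⊆ U'`, `U ⊕ U' = V = W ⊕ W'`, and `(L ∩ U) + (L ∩ U') = L = (L ∩ W) + (L ∩ W')`. -/
theorem stmt0 (V : Type*) [AddCommGroup V] [Module ℚ V] [FiniteDimensional ℚ V]
    (L : Submodule ℤ V) (hLfg : L.FG) (hLspan : Submodule.span ℚ (L : Set V) = ⊤)
    (U W : Submodule ℚ V) (hUW : U ≤ W) :
    ∃ U' W' : Submodule ℚ V, W' ≤ U' ∧ IsCompl U U' ∧ IsCompl W W' ∧
      (L ⊓ U.restrictScalars ℤ) ⊔ (L ⊓ U'.restrictScalars ℤ) = L ∧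
      (L ⊓ W.restrictScalars ℤ) ⊔ (L ⊓ W'.restrictScalars ℤ) = L := by
  have hUW' : U.restrictScalars ℤ ≤ W.restrictScalars ℤ := fun x hx => hUW hx
  set A : Submodule ℤ V := L ⊓ U.restrictScalars ℤ with hA
  set B : Submodule ℤ V := L ⊓ W.restrictScalars ℤ with hB
  obtain ⟨C, hCL, hBC, hBCsup⟩ := aux_compl L hLfg W
  have hBfg : B.FG := aux_fg_of_le hLfg inf_le_left
  obtain ⟨D, hDB, hAD', hADsup'⟩ := aux_compl B hBfg U
  have hBU : B ⊓ U.restrictScalars ℤ = A := by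
    rw [hB, hA, inf_assoc, inf_eq_right.mpr hUW']
  rw [hBU] at hAD' hADsup'
  have hBL : B ≤ L := inf_le_left
  have hAB : A ≤ B := inf_le_inf_left L hUW'
  have hDCL : D ⊔ C ≤ L := sup_le (hDB.trans hBL) hCL
  -- key disjointness over ℤ
  have hkey : A ⊓ (D ⊔ C) = ⊥ := by
    rw [eq_bot_iff]
    rintro x ⟨hxA, hxDC⟩
    obtain ⟨d, hd, c, hc, rfl⟩ := Submodule.mem_sup.mp hxDC
    have hcB : c ∈ B := by
      have : c = (d + c) - d := by abel
      rw [this]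
      exact B.sub_mem (hAB hxA) (hDB hd)
    have hc0 : c = 0 := by
      have : c ∈ B ⊓ C := ⟨hcB, hc⟩
      rwa [hBC, Submodule.mem_bot] at this
    subst hc0
    have : d ∈ A ⊓ D := ⟨by simpa using hxA, hd⟩
    rw [hAD', Submodule.mem_bot] at this
    simp [this]
  have hLdecomp : A ⊔ (D ⊔ C) = L := by
    rw [← sup_assoc, hADsup', hBCsup]
  set U' : Submodule ℚ V := Submodule.span ℚ ((D ⊔ C : Submodule ℤ V) : Set V) with hU'def
  set W' : Submodule ℚ V := Submodule.span ℚ (C : Set V) with hW'def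
  have hspanA : Submodule.span ℚ (A : Set V) = U := aux_span L U (by rw [hLspan]; exact le_top)
  have hspanB : Submodule.span ℚ (B : Set V) = W := aux_span L W (by rw [hLspan]; exact le_top)
  have hWU' : W' ≤ U' := Submodule.span_mono (SetLike.coe_subset_coe.mpr le_sup_right)
  have hdisjU : Disjoint U U' := by
    rw [disjoint_iff, eq_bot_iff]
    rintro x ⟨hxU, hxU'⟩
    obtain ⟨n, hn, hnx⟩ := aux_smul _ hxU'
    have hnxA : n • x ∈ A := ⟨hDCL hnx, Submodule.smul_mem _ n hxU⟩
    have h0 : n • x = 0 := by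
      have : n • x ∈ A ⊓ (D ⊔ C) := ⟨hnxA, hnx⟩
      rwa [hkey, Submodule.mem_bot] at this
    rw [← Int.cast_smul_eq_zsmul ℚ, smul_eq_zero] at h0
    rcases h0 with h | h
    · exact absurd h (by exact_mod_cast hn)
    · simp [h]
  have hcodU : Codisjoint U U' := by
    rw [codisjoint_iff, eq_top_iff, ← hLspan, ← hLdecomp, aux_sup]
    refine sup_le ?_ ?_
    · rw [hspanA]; exact le_sup_left
    · exact le_sup_right
  have hdisjW : Disjoint W W' := by
    rw [disjoint_iff, eq_bot_iff]
    rintro x ⟨hxW, hxW'⟩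
    obtain ⟨n, hn, hnx⟩ := aux_smul _ hxW'
    have h0 : n • x = 0 := by
      have : n • x ∈ B ⊓ C := ⟨⟨hCL hnx, Submodule.smul_mem _ n hxW⟩, hnx⟩
      rwa [hBC, Submodule.mem_bot] at this
    rw [← Int.cast_smul_eq_zsmul ℚ, smul_eq_zero] at h0
    rcases h0 with h | h
    · exact absurd h (by exact_mod_cast hn)
    · simp [h]
  have hcodW : Codisjoint W W' := by
    rw [codisjoint_iff, eq_top_iff, ← hLspan, ← hBCsup, aux_sup]
    refine sup_le ?_ le_sup_right
    rw [hspanB]; exact le_sup_left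
  have heqU : (L ⊓ U.restrictScalars ℤ) ⊔ (L ⊓ U'.restrictScalars ℤ) = L := by
    refine le_antisymm (sup_le inf_le_left inf_le_left) ?_
    have hstep : A ⊔ (D ⊔ C) ≤ (L ⊓ U.restrictScalars ℤ) ⊔ (L ⊓ U'.restrictScalars ℤ) :=
      sup_le le_sup_left
        (le_sup_of_le_right (le_inf hDCL (fun x hx => Submodule.subset_span hx)))
    exact hLdecomp ▸ hstep
  have heqW : (L ⊓ W.restrictScalars ℤ) ⊔ (L ⊓ W'.restrictScalars ℤ) = L := by
    refine le_antisymm (sup_le inf_le_left inf_le_left) ?_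
    have hstep : B ⊔ C ≤ (L ⊓ W.restrictScalars ℤ) ⊔ (L ⊓ W'.restrictScalars ℤ) :=
      sup_le le_sup_left
        (le_sup_of_le_right (le_inf hCL (fun x hx => Submodule.subset_span hx)))
    exact hBCsup ▸ hstep
  exact ⟨U', W', hWU', ⟨hdisjU, hcodU⟩, ⟨hdisjW, hcodW⟩, heqU, heqW⟩
end

section
/- Let g and h be linear automorphisms of V such that g(v) = v for all v ∈ V₁ and h(v) − v ∈ V₁ for all v ∈ V. Then ε(g ∘ h) = ε(g) + ε(h). -/
/-- The error map `ε : End(V) → Lin(Wₙ₋₁, V₁)`, `ε(φ) = π ∘ φ|_{Wₙ₋₁}`, where `π` is the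
projection of `V` onto `V₁` along `W₁`. -/
noncomputable def eps {V : Type*} [AddCommGroup V] [Module ℚ V]
    (V₁ W₁ Wn : Submodule ℚ V) (hc : IsCompl V₁ W₁) (φ : V →ₗ[ℚ] V) :
    Wn →ₗ[ℚ] V₁ :=
  (V₁.linearProjOfIsCompl W₁ hc).comp (φ.comp Wn.subtype)

/-- Let `g` and `h` be linear automorphisms of `V` such that `g(v) = v` for
all `v ∈ V₁` and `h(v) − v ∈ V₁` for all `v ∈ V`.  Then `ε(g ∘ h) = ε(g) + ε(h)`. -/
theorem stmt2 {V : Type*} [AddCommGroup V] [Module ℚ V] [FiniteDimensional ℚ V]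
    (V₁ W₁ Wn : Submodule ℚ V) (hc : IsCompl V₁ W₁) (hWn : Wn ≤ W₁)
    (g h : V ≃ₗ[ℚ] V)
    (hg : ∀ v ∈ V₁, g v = v)
    (hh : ∀ v : V, h v - v ∈ V₁) :
    eps V₁ W₁ Wn hc (g.toLinearMap ∘ₗ h.toLinearMap) =
      eps V₁ W₁ Wn hc g.toLinearMap + eps V₁ W₁ Wn hc h.toLinearMap := by
  ext w
  have hgh : g (h (w : V)) = (h w - w) + g w := by
    have : g (h (w : V)) = g (h w - w) + g w := by
      rw [← map_add, sub_add_cancel]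
    rw [this, hg _ (hh w)]
  have hproj0 : V₁.linearProjOfIsCompl W₁ hc (w : V) = 0 :=
    Submodule.projectionOnto_apply_of_mem_right hc (hWn w.2)
  have hproj1 : V₁.linearProjOfIsCompl W₁ hc ((h w : V) - w) =
      V₁.linearProjOfIsCompl W₁ hc (h w) := by
    rw [map_sub, hproj0, sub_zero]
  simp only [eps, LinearMap.comp_apply, LinearMap.add_apply, Submodule.subtype_apply,
    LinearEquiv.coe_coe, hgh, map_add, hproj1]
  rw [add_comm]
end

section
/- Let g be a linear automorphism of V such that g(v) = v for all v ∈ V₁, g(L ∩ V_{n-1}) = L ∩ V_{n-1}, and g(L + V₁) = L + V₁. Then g(L) = L if and only if ε(g) ∈ Γ. -/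
lemma proj_add {V : Type*} [AddCommGroup V] [Module ℚ V]
    {V₁ W₁ : Submodule ℚ V} (hc : IsCompl V₁ W₁) {a b : V}
    (ha : a ∈ V₁) (hb : b ∈ W₁) :
    ((V₁.linearProjOfIsCompl W₁ hc) (a + b) : V) = a := by
  rw [map_add]
  have h1 : (V₁.linearProjOfIsCompl W₁ hc) a = ⟨a, ha⟩ :=
    Submodule.linearProjOfIsCompl_apply_left hc ⟨a, ha⟩
  have h2 : (V₁.linearProjOfIsCompl W₁ hc) b = 0 :=
    Submodule.projectionOnto_apply_of_mem_right hc hb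
  rw [h1, h2]
  simp

/-- Let `L` be a full-dimensional lattice of `V`, `V₁ ⊆ Vₙ₋₁` subspaces,
`Wₙ₋₁ ⊆ W₁` a system of `L`-complements for `V₁ ⊆ Vₙ₋₁`, and `g` a linear automorphism of
`V` such that `g(v) = v` for `v ∈ V₁`, `g(L ∩ Vₙ₋₁) = L ∩ Vₙ₋₁` and `g(L + V₁) = L + V₁`.
Then `g(L) = L` if and only if `ε(g) ∈ Γ`, where
`Γ = {γ : γ(L ∩ Wₙ₋₁) ⊆ L ∩ V₁}`. -/
theorem stmt3 {V : Type*} [AddCommGroup V] [Module ℚ V] [FiniteDimensional ℚ V]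
    (L : Submodule ℤ V) (hLfg : L.FG) (hLspan : Submodule.span ℚ (L : Set V) = ⊤)
    (V₁ Vn W₁ Wn : Submodule ℚ V) (hV : V₁ ≤ Vn) (hW : Wn ≤ W₁)
    (hc1 : IsCompl V₁ W₁) (hcn : IsCompl Vn Wn)
    (hL1 : (L ⊓ V₁.restrictScalars ℤ) ⊔ (L ⊓ W₁.restrictScalars ℤ) = L)
    (hLn : (L ⊓ Vn.restrictScalars ℤ) ⊔ (L ⊓ Wn.restrictScalars ℤ) = L)
    (g : V ≃ₗ[ℚ] V)
    (hgV₁ : ∀ v ∈ V₁, g v = v)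
    (hgVn : Submodule.map (g.toLinearMap.restrictScalars ℤ) (L ⊓ Vn.restrictScalars ℤ) =
      L ⊓ Vn.restrictScalars ℤ)
    (hgLV₁ : Submodule.map (g.toLinearMap.restrictScalars ℤ) (L ⊔ V₁.restrictScalars ℤ) =
      L ⊔ V₁.restrictScalars ℤ) :
    Submodule.map (g.toLinearMap.restrictScalars ℤ) L = L ↔
      ∀ w : Wn, (w : V) ∈ L → (eps V₁ W₁ Wn hc1 g.toLinearMap w : V) ∈ L := by
  have heps : ∀ w : Wn, (eps V₁ W₁ Wn hc1 g.toLinearMap w : V)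
      = ((V₁.linearProjOfIsCompl W₁ hc1) (g (w : V)) : V) := fun w => rfl
  constructor
  · intro hgL w hw
    have hgw : g (w : V) ∈ L := by
      rw [← hgL]; exact Submodule.mem_map_of_mem hw
    rw [← hL1] at hgw
    rcases Submodule.mem_sup.mp hgw with ⟨a, ha, b, hb, hab⟩
    rw [heps, ← hab, proj_add hc1 ha.2 hb.2]
    exact ha.1
  · intro hΓ
    -- g(L) ⊆ L
    have hsub : ∀ x ∈ L, g x ∈ L := by
      intro x hx
      rw [← hLn] at hx
      rcases Submodule.mem_sup.mp hx with ⟨v, hv, w, hw, hvw⟩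
      have hgv : g v ∈ L := by
        have : g v ∈ Submodule.map (g.toLinearMap.restrictScalars ℤ)
            (L ⊓ Vn.restrictScalars ℤ) := Submodule.mem_map_of_mem hv
        rw [hgVn] at this; exact this.1
      -- g w ∈ L
      have hgw : g w ∈ L := by
        have hp : ((V₁.linearProjOfIsCompl W₁ hc1) (g w) : V) ∈ L := by
          have := hΓ ⟨w, hw.2⟩ hw.1
          rwa [heps] at this
        -- g w ∈ L ⊔ V₁
        have hgwLV : g w ∈ L ⊔ V₁.restrictScalars ℤ := by
          rw [← hgLV₁]
          exact Submodule.mem_map_of_mem (Submodule.mem_sup_left hw.1)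
        rcases Submodule.mem_sup.mp hgwLV with ⟨l, hl, u, hu, hlu⟩
        rw [← hL1] at hl
        rcases Submodule.mem_sup.mp hl with ⟨a, ha, b, hb, habl⟩
        have hproj : ((V₁.linearProjOfIsCompl W₁ hc1) (g w) : V) = a + u := by
          have : g w = (a + u) + b := by rw [← hlu, ← habl]; abel
          rw [this, proj_add hc1 (V₁.add_mem ha.2 hu) hb.2]
        have hb' : g w = ((V₁.linearProjOfIsCompl W₁ hc1) (g w) : V) + b := by
          rw [hproj, ← hlu, ← habl]; abel
        rw [hb']
        exact L.add_mem hp hb.1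
      rw [← hvw, map_add]
      exact L.add_mem hgv hgw
    apply le_antisymm
    · rintro x ⟨y, hy, rfl⟩
      exact hsub y hy
    · intro x hx
      have hxLV : x ∈ L ⊔ V₁.restrictScalars ℤ := Submodule.mem_sup_left hx
      rw [← hgLV₁] at hxLV
      rcases hxLV with ⟨z, hz, hzx⟩
      rcases Submodule.mem_sup.mp hz with ⟨l, hl, u, hu, hlu⟩
      have hgu : g u = u := hgV₁ u hu
      have hgl : (g.toLinearMap.restrictScalars ℤ) z = g l + u := by
        simp only [← hlu]
        simp [map_add, hgu]
      have hul : u ∈ L := by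
        have : u = x - g l := by rw [← hzx, hgl]; abel
        rw [this]
        exact L.sub_mem hx (hsub l hl)
      exact ⟨l + u, L.add_mem hl hul, by rw [map_add]; simp [hgu, ← hzx, hgl]⟩
end

section
/- Let f and g be linear automorphisms of V such that each of f and g acts as the identity on V₁, maps V_{n-1} onto V_{n-1}, satisfies f(v) − v ∈ V_{n-1} (respectively g(v) − v ∈ V_{n-1}) for all v ∈ V, and fixes setwise both L ∩ V_{n-1} and L + V₁. Then ε(f ∘ g) − ε(f) − ε(g) ∈ Γ; that is, g ↦ ε(g) + Γ is a group homomorphism from the group of all such automorphisms to Lin(W_{n-1}, V₁)/Γ. -/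
/-- Let `f` and `g` be linear automorphisms of `V` acting as the identity on
`V₁`, mapping `Vₙ₋₁` onto `Vₙ₋₁`, with `f(v) − v ∈ Vₙ₋₁` and `g(v) − v ∈ Vₙ₋₁` for all `v`,
and fixing setwise both `L ∩ Vₙ₋₁` and `L + V₁`.  Then `ε(f ∘ g) − ε(f) − ε(g) ∈ Γ`, i.e.
`g ↦ ε(g) + Γ` is a group homomorphism into `Lin(Wₙ₋₁, V₁)/Γ`. -/
theorem stmt4 {V : Type*} [AddCommGroup V] [Module ℚ V] [FiniteDimensional ℚ V]
    (L : Submodule ℤ V) (hLfg : L.FG) (hLspan : Submodule.span ℚ (L : Set V) = ⊤)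
    (V₁ Vn W₁ Wn : Submodule ℚ V) (hV : V₁ ≤ Vn) (hW : Wn ≤ W₁)
    (hc1 : IsCompl V₁ W₁) (hcn : IsCompl Vn Wn)
    (hL1 : (L ⊓ V₁.restrictScalars ℤ) ⊔ (L ⊓ W₁.restrictScalars ℤ) = L)
    (hLn : (L ⊓ Vn.restrictScalars ℤ) ⊔ (L ⊓ Wn.restrictScalars ℤ) = L)
    (f g : V ≃ₗ[ℚ] V)
    (hfV₁ : ∀ v ∈ V₁, f v = v) (hgV₁ : ∀ v ∈ V₁, g v = v)
    (hfVn : Submodule.map f.toLinearMap Vn = Vn)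
    (hgVn : Submodule.map g.toLinearMap Vn = Vn)
    (hfv : ∀ v : V, f v - v ∈ Vn) (hgv : ∀ v : V, g v - v ∈ Vn)
    (hfLVn : Submodule.map (f.toLinearMap.restrictScalars ℤ) (L ⊓ Vn.restrictScalars ℤ) =
      L ⊓ Vn.restrictScalars ℤ)
    (hgLVn : Submodule.map (g.toLinearMap.restrictScalars ℤ) (L ⊓ Vn.restrictScalars ℤ) =
      L ⊓ Vn.restrictScalars ℤ)
    (hfLV₁ : Submodule.map (f.toLinearMap.restrictScalars ℤ) (L ⊔ V₁.restrictScalars ℤ) =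
      L ⊔ V₁.restrictScalars ℤ)
    (hgLV₁ : Submodule.map (g.toLinearMap.restrictScalars ℤ) (L ⊔ V₁.restrictScalars ℤ) =
      L ⊔ V₁.restrictScalars ℤ) :
    ∀ w : Wn, (w : V) ∈ L →
      ((eps V₁ W₁ Wn hc1 (f.toLinearMap ∘ₗ g.toLinearMap)
        - eps V₁ W₁ Wn hc1 f.toLinearMap - eps V₁ W₁ Wn hc1 g.toLinearMap) w : V) ∈ L := by
  intro w hw
  set π := V₁.linearProjOfIsCompl W₁ hc1 with hπdef
  -- the projection of a lattice element lies in the lattice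
  have key : ∀ x : V, x ∈ L → ((π x : V) ∈ L) := by
    intro x hx
    rw [← hL1] at hx
    rcases Submodule.mem_sup.mp hx with ⟨a, ha, b, hb, rfl⟩
    have h1 : π a = ⟨a, ha.2⟩ :=
      Submodule.linearProjOfIsCompl_apply_left hc1 ⟨a, ha.2⟩
    have h2 : π b = 0 :=
      Submodule.linearProjOfIsCompl_apply_right hc1 ⟨b, hb.2⟩
    rw [map_add, h1, h2, add_zero]
    exact ha.1
  have hπw : π (w : V) = 0 :=
    Submodule.linearProjOfIsCompl_apply_right hc1 ⟨(w : V), hW w.2⟩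
  -- decompose g w - w
  have hgw_mem : g (w : V) ∈ L ⊔ V₁.restrictScalars ℤ := by
    rw [← hgLV₁]
    exact Submodule.mem_map_of_mem (Submodule.mem_sup_left hw)
  have hv_mem : g (w : V) - (w : V) ∈ L ⊔ V₁.restrictScalars ℤ :=
    sub_mem hgw_mem (Submodule.mem_sup_left hw)
  rcases Submodule.mem_sup.mp hv_mem with ⟨l, hl, u, hu, hvlu⟩
  have hvVn : g (w : V) - (w : V) ∈ Vn := hgv w
  have hlVn : l ∈ Vn := by
    have hleq : l = (g (w : V) - (w : V)) - u := by rw [← hvlu]; abel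
    rw [hleq]
    exact sub_mem hvVn (hV hu)
  have hflL : f l ∈ L ⊓ Vn.restrictScalars ℤ := by
    rw [← hfLVn]
    exact Submodule.mem_map_of_mem ⟨hl, hlVn⟩
  have hfu : f u = u := hfV₁ u hu
  have hexpr : f (g (w : V)) - f (w : V) - g (w : V) = f l - l - (w : V) := by
    have h1 : g (w : V) = (w : V) + (l + u) := by rw [hvlu]; abel
    rw [h1]
    simp only [map_add, hfu]
    abel
  have hgoal : ((eps V₁ W₁ Wn hc1 (f.toLinearMap ∘ₗ g.toLinearMap)
      - eps V₁ W₁ Wn hc1 f.toLinearMap - eps V₁ W₁ Wn hc1 g.toLinearMap) w : V₁)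
      = π (f l - l) := by
    simp only [eps, LinearMap.sub_apply, LinearMap.comp_apply, Submodule.subtype_apply,
      LinearEquiv.coe_coe, ← hπdef]
    rw [← map_sub, ← map_sub, hexpr, map_sub, map_sub, hπw, sub_zero]
  rw [hgoal]
  exact key _ (sub_mem hflL.1 hl)
end

section
/- Let G be a subgroup of GL(V) such that every g ∈ G acts as the identity on V₁, maps V_{n-1} onto V_{n-1}, and satisfies g(v) − v ∈ V_{n-1} for all v ∈ V. Let N = {h ∈ G : h(w) = w for all w ∈ V_{n-1} and h(v) − v ∈ V₁ for all v ∈ V}. Then for every g ∈ G with g(L ∩ V_{n-1}) = L ∩ V_{n-1} and g(L + V₁) = L + V₁, one has ε(g) ∈ Γ + ε(N) if and only if there exists h ∈ N with (g ∘ h)(L) = L. -/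
/-- Let `G` be a subgroup of `GL(V)` such that every `g ∈ G` acts as the
identity on `V₁`, maps `Vₙ₋₁` onto `Vₙ₋₁`, and satisfies `g(v) − v ∈ Vₙ₋₁` for all `v ∈ V`.
Let `N = {h ∈ G : h(w) = w for all w ∈ Vₙ₋₁ and h(v) − v ∈ V₁ for all v ∈ V}`.  Then for
every `g ∈ G` with `g(L ∩ Vₙ₋₁) = L ∩ Vₙ₋₁` and `g(L + V₁) = L + V₁`, one has
`ε(g) ∈ Γ + ε(N)` if and only if there exists `h ∈ N` with `(g ∘ h)(L) = L`. -/
theorem stmt5 {V : Type*} [AddCommGroup V] [Module ℚ V] [FiniteDimensional ℚ V]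
    (L : Submodule ℤ V) (hLfg : L.FG) (hLspan : Submodule.span ℚ (L : Set V) = ⊤)
    (V₁ Vn W₁ Wn : Submodule ℚ V) (hV : V₁ ≤ Vn) (hW : Wn ≤ W₁)
    (hc1 : IsCompl V₁ W₁) (hcn : IsCompl Vn Wn)
    (hL1 : (L ⊓ V₁.restrictScalars ℤ) ⊔ (L ⊓ W₁.restrictScalars ℤ) = L)
    (hLn : (L ⊓ Vn.restrictScalars ℤ) ⊔ (L ⊓ Wn.restrictScalars ℤ) = L)
    (G : Subgroup (V ≃ₗ[ℚ] V))
    (hG : ∀ g ∈ G, (∀ v ∈ V₁, g v = v) ∧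
      Submodule.map (g : V ≃ₗ[ℚ] V).toLinearMap Vn = Vn ∧
      ∀ v : V, g v - v ∈ Vn)
    (g : V ≃ₗ[ℚ] V) (hgG : g ∈ G)
    (hgLVn : Submodule.map (g.toLinearMap.restrictScalars ℤ) (L ⊓ Vn.restrictScalars ℤ) =
      L ⊓ Vn.restrictScalars ℤ)
    (hgLV₁ : Submodule.map (g.toLinearMap.restrictScalars ℤ) (L ⊔ V₁.restrictScalars ℤ) =
      L ⊔ V₁.restrictScalars ℤ) :
    (∃ γ : Wn →ₗ[ℚ] V₁, (∀ w : Wn, (w : V) ∈ L → (γ w : V) ∈ L) ∧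
      ∃ h : V ≃ₗ[ℚ] V,
        (h ∈ G ∧ (∀ w ∈ Vn, h w = w) ∧ ∀ v : V, h v - v ∈ V₁) ∧
        eps V₁ W₁ Wn hc1 g.toLinearMap = γ + eps V₁ W₁ Wn hc1 h.toLinearMap) ↔
    (∃ h : V ≃ₗ[ℚ] V,
      (h ∈ G ∧ (∀ w ∈ Vn, h w = w) ∧ ∀ v : V, h v - v ∈ V₁) ∧
      Submodule.map ((g.toLinearMap ∘ₗ h.toLinearMap).restrictScalars ℤ) L = L) := by
  classical
  -- the projection onto V₁ along W₁, as an endomorphism of V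
  set p : V →ₗ[ℚ] V := V₁.subtype.comp (V₁.linearProjOfIsCompl W₁ hc1) with hpdef
  have hp1 : ∀ x ∈ V₁, p x = x := by
    intro x hx
    have := Submodule.projectionOnto_apply_left hc1 ⟨x, hx⟩
    exact congrArg (Subtype.val) this
  have hp0 : ∀ x ∈ W₁, p x = 0 := by
    intro x hx
    have := Submodule.projectionOnto_apply_of_mem_right hc1 hx
    exact congrArg (Subtype.val) this
  -- decomposition along V₁ ⊕ W₁ respects L
  have hdec1 : ∀ x ∈ L, p x ∈ L ∧ x - p x ∈ L := by
    intro x hx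
    rw [← hL1] at hx
    obtain ⟨a, ha, b, hb, rfl⟩ := Submodule.mem_sup.mp hx
    have hpa : p (a + b) = a := by
      rw [map_add, hp1 a ha.2, hp0 b hb.2, add_zero]
    rw [hpa]
    exact ⟨ha.1, by simpa using hb.1⟩
  -- the fundamental additivity identity for p
  have hadd : ∀ a : V ≃ₗ[ℚ] V, (∀ v ∈ V₁, a v = v) → ∀ u w : V, u - w ∈ V₁ → w ∈ W₁ →
      p (a u) = p (a w) + p u := by
    intro a ha u w huw hw
    have h1 : a u = a w + (u - w) := by
      have h0 : a u = a (w + (u - w)) := by rw [add_sub_cancel]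
      rw [h0, map_add, ha (u - w) huw]
    have h2 : p u = u - w := by
      have h3 : u = w + (u - w) := by rw [add_sub_cancel]
      rw [h3, map_add, hp0 w hw, hp1 _ huw, zero_add, add_sub_cancel_left]
    rw [h1, map_add, hp1 _ huw, h2]
  -- properties of inverses of elements of N
  have hNinv : ∀ h : V ≃ₗ[ℚ] V, (∀ w ∈ Vn, h w = w) → (∀ v : V, h v - v ∈ V₁) →
      (∀ w ∈ Vn, h.symm w = w) ∧ (∀ v : V, h.symm v - v ∈ V₁) := by
    intro h h1 h2
    constructor
    · intro w hw
      have := congrArg h.symm (h1 w hw)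
      simpa using this.symm
    · intro v
      have := h2 (h.symm v)
      rw [h.apply_symm_apply] at this
      simpa using V₁.neg_mem this
  -- N elements fix V₁ pointwise
  have hNfix : ∀ h : V ≃ₗ[ℚ] V, (∀ w ∈ Vn, h w = w) → ∀ v ∈ V₁, h v = v :=
    fun h h1 v hv => h1 v (hV hv)
  -- p of the inverse on Wn
  have hinvp : ∀ h : V ≃ₗ[ℚ] V, (∀ w ∈ Vn, h w = w) → (∀ v : V, h v - v ∈ V₁) →
      ∀ w : V, w ∈ Wn → p (h.symm w) = - p (h w) := by
    intro h h1 h2 w hw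
    have hs := (hNinv h h1 h2).2
    have e1 : p (h (h.symm w)) = p (h w) + p (h.symm w) :=
      hadd h (hNfix h h1) (h.symm w) w (hs w) (hW hw)
    rw [h.apply_symm_apply, hp0 w (hW hw)] at e1
    exact eq_neg_of_add_eq_zero_right e1.symm
  -- elements of N preserve L ⊓ Vn
  have hNVn : ∀ h : V ≃ₗ[ℚ] V, (∀ w ∈ Vn, h w = w) →
      Submodule.map (h.toLinearMap.restrictScalars ℤ) (L ⊓ Vn.restrictScalars ℤ) =
        L ⊓ Vn.restrictScalars ℤ := by
    intro h h1
    apply le_antisymm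
    · rintro y ⟨x, hx, rfl⟩
      simpa [h1 x hx.2] using hx
    · intro x hx
      exact ⟨x, hx, h1 x hx.2⟩
  -- elements of N preserve L ⊔ V₁
  have hNV₁le : ∀ h : V ≃ₗ[ℚ] V, (∀ v : V, h v - v ∈ V₁) →
      ∀ x ∈ L ⊔ V₁.restrictScalars ℤ, h x ∈ L ⊔ V₁.restrictScalars ℤ := by
    intro h h2 x hx
    have e1 : h x = x + (h x - x) := by abel
    rw [e1]
    exact Submodule.add_mem _ hx (Submodule.mem_sup_right (h2 x))
  have hNV₁ : ∀ h : V ≃ₗ[ℚ] V, (∀ w ∈ Vn, h w = w) → (∀ v : V, h v - v ∈ V₁) →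
      Submodule.map (h.toLinearMap.restrictScalars ℤ) (L ⊔ V₁.restrictScalars ℤ) =
        L ⊔ V₁.restrictScalars ℤ := by
    intro h h1 h2
    apply le_antisymm
    · rintro y ⟨x, hx, rfl⟩
      exact hNV₁le h h2 x hx
    · intro x hx
      refine ⟨h.symm x, hNV₁le h.symm ((hNinv h h1 h2).2) x hx, ?_⟩
      simp
  -- the key lemma
  have hmain : ∀ e : V ≃ₗ[ℚ] V, (∀ v : V, e v - v ∈ Vn) →
      Submodule.map (e.toLinearMap.restrictScalars ℤ) (L ⊓ Vn.restrictScalars ℤ) =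
        L ⊓ Vn.restrictScalars ℤ →
      Submodule.map (e.toLinearMap.restrictScalars ℤ) (L ⊔ V₁.restrictScalars ℤ) =
        L ⊔ V₁.restrictScalars ℤ →
      (∀ x : V, x ∈ L → x ∈ Wn → p (e x) ∈ L) →
      Submodule.map (e.toLinearMap.restrictScalars ℤ) L = L := by
    intro e heVn heLVn heLV₁ heps
    have hsub : ∀ x ∈ L, e x ∈ L := by
      intro x hx
      rw [← hLn] at hx
      obtain ⟨a, ha, b, hb, rfl⟩ := Submodule.mem_sup.mp hx
      have hea : e a ∈ L := by
        have h1 : e a ∈ L ⊓ Vn.restrictScalars ℤ := by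
          rw [← heLVn]; exact ⟨a, ha, rfl⟩
        exact h1.1
      have heb : e b ∈ L := by
        have h1 : e b ∈ L ⊔ V₁.restrictScalars ℤ := by
          rw [← heLV₁]; exact ⟨b, Submodule.mem_sup_left hb.1, rfl⟩
        obtain ⟨ℓ, hℓ, v, hv, hlv⟩ := Submodule.mem_sup.mp h1
        have hpeb : p (e b) ∈ L := heps b hb.1 hb.2
        have hkey : e b = p (e b) + (ℓ - p ℓ) := by
          have h2 : p (e b) = p ℓ + v := by
            rw [← hlv, map_add, hp1 v hv]
          rw [h2, ← hlv]; abel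
        rw [hkey]
        exact L.add_mem hpeb (L.sub_mem hℓ (hdec1 ℓ hℓ).1)
      rw [map_add]; exact L.add_mem hea heb
    apply le_antisymm
    · rintro y ⟨x, hx, rfl⟩
      exact hsub x hx
    · intro y hy
      have h1 : e y - y ∈ L ⊓ Vn.restrictScalars ℤ :=
        ⟨L.sub_mem (hsub y hy) hy, heVn y⟩
      rw [← heLVn] at h1
      obtain ⟨z, hz, hez⟩ := h1
      refine ⟨y - z, L.sub_mem hy hz.1, ?_⟩
      have hez' : e z = e y - y := hez
      show e (y - z) = y
      rw [map_sub, hez']; abel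
  obtain ⟨hg1, hgVnmap, hgd⟩ := hG g hgG
  constructor
  · -- forward direction
    rintro ⟨γ, hγ, h, ⟨hhG, hhVn, hhV₁⟩, heq⟩
    obtain ⟨hsVn, hsV₁⟩ := hNinv h hhVn hhV₁
    refine ⟨h.symm, ⟨inv_mem hhG, hsVn, hsV₁⟩, ?_⟩
    have heqw : ∀ w : Wn, p (g (w : V)) = (γ w : V) + p (h (w : V)) :=
      fun w => congrArg Subtype.val (LinearMap.congr_fun heq w)
    have heG : h.symm.trans g ∈ G := mul_mem hgG (inv_mem hhG)
    obtain ⟨he1, heVnmap, heVn⟩ := hG _ heG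
    have hcomp : ((h.symm.trans g).toLinearMap.restrictScalars ℤ) =
        (g.toLinearMap.restrictScalars ℤ).comp (h.symm.toLinearMap.restrictScalars ℤ) := rfl
    have hmap1 : Submodule.map ((h.symm.trans g).toLinearMap.restrictScalars ℤ)
        (L ⊓ Vn.restrictScalars ℤ) = L ⊓ Vn.restrictScalars ℤ := by
      rw [hcomp, Submodule.map_comp, hNVn h.symm hsVn, hgLVn]
    have hmap2 : Submodule.map ((h.symm.trans g).toLinearMap.restrictScalars ℤ)
        (L ⊔ V₁.restrictScalars ℤ) = L ⊔ V₁.restrictScalars ℤ := by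
      rw [hcomp, Submodule.map_comp, hNV₁ h.symm hsVn hsV₁, hgLV₁]
    have hepsG : ∀ x : V, x ∈ L → x ∈ Wn → p ((h.symm.trans g) x) ∈ L := by
      intro x hxL hxW
      have e1 : p (g (h.symm x)) = p (g x) + p (h.symm x) :=
        hadd g hg1 (h.symm x) x (hsV₁ x) (hW hxW)
      have e2 : p (h.symm x) = - p (h x) := hinvp h hhVn hhV₁ x hxW
      have e3 : p (g x) = (γ ⟨x, hxW⟩ : V) + p (h x) := heqw ⟨x, hxW⟩
      have e4 : (h.symm.trans g) x = g (h.symm x) := rfl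
      rw [e4, e1, e2, e3]
      have e5 : (γ ⟨x, hxW⟩ : V) + p (h x) + - p (h x) = (γ ⟨x, hxW⟩ : V) := by abel
      rw [e5]
      exact hγ ⟨x, hxW⟩ hxL
    have := hmain (h.symm.trans g) heVn hmap1 hmap2 hepsG
    exact this
  · -- backward direction
    rintro ⟨h, ⟨hhG, hhVn, hhV₁⟩, hLmap⟩
    obtain ⟨hsVn, hsV₁⟩ := hNinv h hhVn hhV₁
    refine ⟨eps V₁ W₁ Wn hc1 (g.toLinearMap ∘ₗ h.toLinearMap), ?_, h.symm,
      ⟨inv_mem hhG, hsVn, hsV₁⟩, ?_⟩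
    · intro w hw
      have h1 : g (h (w : V)) ∈ L := by
        rw [← hLmap]
        exact ⟨(w : V), hw, rfl⟩
      have h2 : ((eps V₁ W₁ Wn hc1 (g.toLinearMap ∘ₗ h.toLinearMap)) w : V) =
          p (g (h (w : V))) := rfl
      rw [h2]
      exact (hdec1 _ h1).1
    · apply LinearMap.ext
      intro w
      apply Subtype.ext
      show p (g (w : V)) = p (g (h (w : V))) + p (h.symm (w : V))
      have e1 : p (g (h (w : V))) = p (g (w : V)) + p (h (w : V)) :=
        hadd g hg1 (h (w : V)) (w : V) (hhV₁ (w : V)) (hW w.2)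
      have e2 : p (h.symm (w : V)) = - p (h (w : V)) := hinvp h hhVn hhV₁ (w : V) w.2
      rw [e1, e2]; abel
end

section
/- Let x be a linear endomorphism of V such that x(V) ⊆ V₁ and x(V_{n-1}) = 0. Then id_V + x is a linear automorphism of V, and (id_V + x)(L) = L if and only if ε(x) ∈ Γ. -/
lemma eps_coe {V : Type*} [AddCommGroup V] [Module ℚ V]
    (V₁ W₁ Wn : Submodule ℚ V) (hc : IsCompl V₁ W₁) (φ : V →ₗ[ℚ] V)
    (hφ : ∀ v : V, φ v ∈ V₁) (w : Wn) :
    (eps V₁ W₁ Wn hc φ w : V) = φ w := by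
  have h := Submodule.linearProjOfIsCompl_apply_left hc ⟨φ w, hφ w⟩
  simp only [eps, LinearMap.comp_apply, Submodule.subtype_apply]
  rw [show φ (w : V) = ((⟨φ w, hφ w⟩ : V₁) : V) from rfl]
  exact congrArg Subtype.val h

/-- Let `L` be a full-dimensional lattice of `V`, with `V₁ ⊆ Vₙ₋₁` and a
system of `L`-complements `Wₙ₋₁ ⊆ W₁`.  Let `x` be an endomorphism of `V` with
`x(V) ⊆ V₁` and `x(Vₙ₋₁) = 0`.  Then `id_V + x` is a linear automorphism of `V`, and
`(id_V + x)(L) = L` if and only if `ε(x) ∈ Γ`. -/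
theorem stmt9 {V : Type*} [AddCommGroup V] [Module ℚ V] [FiniteDimensional ℚ V]
    (L : Submodule ℤ V) (hLfg : L.FG) (hLspan : Submodule.span ℚ (L : Set V) = ⊤)
    (V₁ Vn W₁ Wn : Submodule ℚ V) (hV : V₁ ≤ Vn) (hW : Wn ≤ W₁)
    (hc1 : IsCompl V₁ W₁) (hcn : IsCompl Vn Wn)
    (hL1 : (L ⊓ V₁.restrictScalars ℤ) ⊔ (L ⊓ W₁.restrictScalars ℤ) = L)
    (hLn : (L ⊓ Vn.restrictScalars ℤ) ⊔ (L ⊓ Wn.restrictScalars ℤ) = L)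
    (x : V →ₗ[ℚ] V)
    (hx1 : ∀ v : V, x v ∈ V₁) (hx2 : ∀ v ∈ Vn, x v = 0) :
    (∃ g : V ≃ₗ[ℚ] V, g.toLinearMap = LinearMap.id + x) ∧
    (Submodule.map ((LinearMap.id + x).restrictScalars ℤ) L = L ↔
      ∀ w : Wn, (w : V) ∈ L → (eps V₁ W₁ Wn hc1 x w : V) ∈ L) := by
  have hxx : ∀ v : V, x (x v) = 0 := fun v => hx2 _ (hV (hx1 v))
  constructor
  · refine ⟨LinearEquiv.ofLinear (LinearMap.id + x) (LinearMap.id - x) ?_ ?_, rfl⟩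
    · ext v
      simp [hxx v]
    · ext v
      simp [hxx v]
  · constructor
    · intro h w hwL
      rw [eps_coe V₁ W₁ Wn hc1 x hx1 w]
      have h1 : (w : V) + x w ∈ L := by
        rw [← h]
        exact ⟨w, hwL, rfl⟩
      have := L.sub_mem h1 hwL
      simpa using this
    · intro h
      have key : ∀ l ∈ L, x l ∈ L := by
        intro l hl
        rw [← hLn] at hl
        rcases Submodule.mem_sup.mp hl with ⟨a, ⟨haL, haV⟩, b, ⟨hbL, hbW⟩, rfl⟩
        have hxa : x a = 0 := hx2 a haV
        have := h ⟨b, hbW⟩ hbL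
        rw [eps_coe V₁ W₁ Wn hc1 x hx1] at this
        simpa [hxa] using this
      apply le_antisymm
      · rintro _ ⟨l, hl, rfl⟩
        simpa using L.add_mem hl (key l hl)
      · intro l hl
        refine ⟨l - x l, L.sub_mem hl (key l hl), ?_⟩
        have : x (x l) = 0 := hxx l
        simp [map_sub, this]
end

section
/- Let G be a group, A an abelian group, and φ : G → A a group homomorphism. Let (g₁, …, gₙ) be a T-sequence for G, and let e⁽¹⁾, …, e⁽ᵐ⁾ be a basis in Hermite normal form of the relation lattice Λ = {(e₁, …, eₙ) ∈ ℤⁿ : φ(g₁)^{e₁} ⋯ φ(gₙ)^{eₙ} = 1}. For j = 1, …, m set k_j = g₁^{e⁽ʲ⁾₁} ⋯ gₙ^{e⁽ʲ⁾ₙ}. Then (k₁, …, k_m) is a T-sequence for the kernel of φ. -/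
/-- The chain of subgroups associated to a tuple `g₁, …, gₙ` of elements of a group:
`G_i = ⟨g_i, …, gₙ⟩` (with 0-based indexing: `tchain g i = ⟨g_j : j ≥ i⟩`, so
`tchain g n = 1`). -/
def tchain {G : Type*} [Group G] {n : ℕ} (g : Fin n → G) (i : ℕ) : Subgroup G :=
  Subgroup.closure {x | ∃ j : Fin n, i ≤ (j : ℕ) ∧ g j = x}

namespace Stmt11Aux

variable {G : Type*} [Group G]

/-- Ordered product `g_s^{a_s} ⋯ g_{n-1}^{a_{n-1}}`. -/
def pp {n : ℕ} (g : Fin n → G) (a : Fin n → ℤ) (s : ℕ) : G :=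
  ((List.ofFn fun l : Fin n => g l ^ a l).drop s).prod

theorem downInd (n : ℕ) (P : ℕ → Prop) (base : ∀ s, n ≤ s → P s)
    (step : ∀ s, s < n → P (s + 1) → P s) : ∀ s, P s := by
  have H : ∀ d s, n ≤ s + d → P s := by
    intro d
    induction d with
    | zero => intro s h; exact base s (by omega)
    | succ d ih =>
      intro s h
      rcases lt_or_ge s n with h' | h'
      · exact step s h' (ih (s + 1) (by omega))
      · exact base s h'
  exact fun s => H n s (by omega)

theorem pp_stop {n : ℕ} (g : Fin n → G) (a : Fin n → ℤ) (s : ℕ) (h : n ≤ s) :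
    pp g a s = 1 := by
  unfold pp
  rw [List.drop_eq_nil_of_le (by simpa using h), List.prod_nil]

theorem pp_succ {n : ℕ} (g : Fin n → G) (a : Fin n → ℤ) (s : ℕ) (h : s < n) :
    pp g a s = g ⟨s, h⟩ ^ a ⟨s, h⟩ * pp g a (s + 1) := by
  unfold pp
  rw [List.drop_eq_getElem_cons (by simpa using h), List.prod_cons, List.getElem_ofFn]

theorem pp_congr {n : ℕ} (g : Fin n → G) (a b : Fin n → ℤ) :
    ∀ s, (∀ l : Fin n, s ≤ (l : ℕ) → a l = b l) → pp g a s = pp g b s := by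
  refine downInd n _ (fun s hs _ => by rw [pp_stop g a s hs, pp_stop g b s hs]) ?_
  intro s hs ih h
  rw [pp_succ g a s hs, pp_succ g b s hs, h ⟨s, hs⟩ le_rfl,
    ih fun l hl => h l (by omega)]

theorem pp_zero_prefix {n : ℕ} (g : Fin n → G) (a : Fin n → ℤ) :
    ∀ s, (∀ l : Fin n, (l : ℕ) < s → a l = 0) → pp g a 0 = pp g a s := by
  intro s
  induction s with
  | zero => intro _; rfl
  | succ s ih =>
    intro h
    rw [ih fun l hl => h l (by omega)]
    rcases lt_or_ge s n with h' | h'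
    · rw [pp_succ g a s h', h ⟨s, h'⟩ (by simp), zpow_zero, one_mul]
    · rw [pp_stop g a s h', pp_stop g a (s + 1) (by omega)]

theorem pp_mem {n : ℕ} (g : Fin n → G) (H : Subgroup G) (a : Fin n → ℤ) :
    ∀ s, (∀ l : Fin n, s ≤ (l : ℕ) → g l ∈ H) → pp g a s ∈ H := by
  refine downInd n _ (fun s hs _ => by rw [pp_stop g a s hs]; exact one_mem H) ?_
  intro s hs ih h
  rw [pp_succ g a s hs]
  exact mul_mem (zpow_mem (h ⟨s, hs⟩ le_rfl) _) (ih fun l hl => h l (by omega))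

theorem mem_tchain {n : ℕ} (g : Fin n → G) {s : ℕ} (j : Fin n) (h : s ≤ (j : ℕ)) :
    g j ∈ tchain g s :=
  Subgroup.subset_closure ⟨j, h, rfl⟩

theorem pp_mem_tchain {n : ℕ} (g : Fin n → G) (a : Fin n → ℤ) (s : ℕ) :
    pp g a s ∈ tchain g s :=
  pp_mem g _ a s fun l hl => mem_tchain g l hl

theorem tchain_mono {n : ℕ} (g : Fin n → G) {s s' : ℕ} (h : s ≤ s') :
    tchain g s' ≤ tchain g s :=
  Subgroup.closure_mono (by rintro x ⟨j, hj, rfl⟩; exact ⟨j, by omega, rfl⟩)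

theorem tchain_bot {n : ℕ} (g : Fin n → G) {s : ℕ} (h : n ≤ s) :
    tchain g s = ⊥ := by
  apply le_bot_iff.mp
  rw [tchain, Subgroup.closure_le]
  rintro x ⟨j, hj, rfl⟩
  exact absurd j.isLt (by omega)

theorem phi_pp {n : ℕ} {A : Type*} [CommGroup A] (φ : G →* A) (g : Fin n → G)
    (a : Fin n → ℤ) : φ (pp g a 0) = ∏ i : Fin n, φ (g i) ^ a i := by
  unfold pp
  rw [List.drop_zero, map_list_prod, List.map_ofFn, ← List.prod_ofFn]
  exact congrArg List.prod (congrArg List.ofFn (funext fun l => by simp))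

theorem prod_ofFn_zpow {H : Type*} [Group H] (z : H) :
    ∀ {m : ℕ} (w : Fin m → ℤ), (List.ofFn fun j => z ^ w j).prod = z ^ (∑ j, w j) := by
  intro m
  induction m with
  | zero => intro w; simp
  | succ m ih =>
    intro w
    rw [List.ofFn_succ, List.prod_cons, Fin.sum_univ_succ, zpow_add]
    congr 1
    exact ih _

theorem exists_nf {n : ℕ} (g : Fin n → G)
    (hnorm : ∀ i : ℕ, ∀ x y : G, y ∈ tchain g i → x * y * x⁻¹ ∈ tchain g i) :
    ∀ s, ∀ x ∈ tchain g s,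
      ∃ a : Fin n → ℤ, (∀ l : Fin n, (l : ℕ) < s → a l = 0) ∧ x = pp g a s := by
  refine downInd n _ ?_ ?_
  · intro s hs x hx
    rw [tchain_bot g hs, Subgroup.mem_bot] at hx
    exact ⟨0, fun l _ => rfl, by rw [hx, pp_stop g 0 s hs]⟩
  · intro s hs ih x hx
    have hS : ∀ x ∈ tchain g s, ∃ b : ℤ, ∃ y ∈ tchain g (s + 1), x = g ⟨s, hs⟩ ^ b * y := by
      intro x hx
      induction hx using Subgroup.closure_induction with
      | mem x hx =>
        obtain ⟨j, hj, rfl⟩ := hx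
        rcases eq_or_lt_of_le hj with h | h
        · refine ⟨1, 1, one_mem _, ?_⟩
          have : j = ⟨s, hs⟩ := Fin.ext h.symm
          rw [this]; simp
        · exact ⟨0, g j, mem_tchain g j h, by simp⟩
      | one => exact ⟨0, 1, one_mem _, by simp⟩
      | mul x y _ _ hx' hy' =>
        obtain ⟨b, u, hu, rfl⟩ := hx'
        obtain ⟨b', u', hu', rfl⟩ := hy'
        refine ⟨b + b', (g ⟨s, hs⟩ ^ b')⁻¹ * u * g ⟨s, hs⟩ ^ b' * u', mul_mem ?_ hu', by group⟩
        simpa using hnorm (s + 1) (g ⟨s, hs⟩ ^ b')⁻¹ u hu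
      | inv x _ hx' =>
        obtain ⟨b, u, hu, rfl⟩ := hx'
        exact ⟨-b, g ⟨s, hs⟩ ^ b * u⁻¹ * (g ⟨s, hs⟩ ^ b)⁻¹,
          hnorm (s + 1) _ _ (inv_mem hu), by group⟩
    obtain ⟨b, y, hy, rfl⟩ := hS x hx
    obtain ⟨a', ha', rfl⟩ := ih y hy
    refine ⟨Function.update a' ⟨s, hs⟩ b, ?_, ?_⟩
    · intro l hl
      rw [Function.update_of_ne (by intro h; rw [h] at hl; simp at hl) b a']
      exact ha' l (by omega)
    · rw [pp_succ g _ s hs, Function.update_self]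
      congr 1
      refine pp_congr g _ _ (s + 1) fun l hl => ?_
      rw [Function.update_of_ne (by intro h; rw [h] at hl; simp at hl) b a']

end Stmt11Aux

/-- `g₁, …, gₙ` is a T-sequence for the subgroup `K`: the associated chain
`K = G₁ ≥ G₂ ≥ ⋯ ≥ G_{n+1} = 1` is a central series of `K` (each `G_{i+1}` is normal in `K`
and `[K, G_i] ⊆ G_{i+1}`) with infinite cyclic factors `G_i/G_{i+1}` (each factor is generated
by the image of `g_i`, and this image has infinite order). -/
def IsTSequenceFor {G : Type*} [Group G] (K : Subgroup G) {n : ℕ} (g : Fin n → G) : Prop :=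
  tchain g 0 = K ∧
  (∀ i : ℕ, ∀ x ∈ K, ∀ y ∈ tchain g i, x * y * x⁻¹ ∈ tchain g i) ∧
  (∀ i : ℕ, i < n → ∀ x ∈ K, ∀ y ∈ tchain g i, x * y * x⁻¹ * y⁻¹ ∈ tchain g (i + 1)) ∧
  (∀ j : Fin n, ∀ e : ℤ, g j ^ e ∈ tchain g ((j : ℕ) + 1) → e = 0)

/-- The tuple `e⁽¹⁾, …, e⁽ᵐ⁾` of vectors of `ℤⁿ` is in Hermite normal form with pivot
indices `i₁ < ⋯ < i_m`. -/
def IsHermiteNF {m n : ℕ} (e : Fin m → Fin n → ℤ) (idx : Fin m → Fin n) : Prop :=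
  StrictMono idx ∧
  (∀ (j : Fin m) (i : Fin n), (i : ℕ) < (idx j : ℕ) → e j i = 0) ∧
  (∀ j : Fin m, 0 < e j (idx j)) ∧
  (∀ k j : Fin m, k < j → 0 ≤ e k (idx j) ∧ e k (idx j) < e j (idx j))

open Stmt11Aux

/-- Let `φ : G → A` be a homomorphism to an abelian group, let
`(g₁, …, gₙ)` be a T-sequence for `G`, and let `e⁽¹⁾, …, e⁽ᵐ⁾` be a basis in Hermite
normal form of the relation lattice `{(e₁, …, eₙ) ∈ ℤⁿ : φ(g₁)^{e₁} ⋯ φ(gₙ)^{eₙ} = 1}`.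
Set `k_j = g₁^{e⁽ʲ⁾₁} ⋯ gₙ^{e⁽ʲ⁾ₙ}`.  Then `(k₁, …, k_m)` is a T-sequence for `ker φ`. -/
theorem stmt11 {G A : Type*} [Group G] [CommGroup A] (φ : G →* A)
    {n m : ℕ} (g : Fin n → G) (hg : IsTSequenceFor ⊤ g)
    (e : Fin m → Fin n → ℤ)
    (hrel : ∀ j : Fin m, ∏ i : Fin n, φ (g i) ^ e j i = 1)
    (hgen : ∀ v : Fin n → ℤ, (∏ i : Fin n, φ (g i) ^ v i) = 1 →
      v ∈ Submodule.span ℤ (Set.range e))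
    (hind : LinearIndependent ℤ e)
    (hnf : ∃ idx : Fin m → Fin n, IsHermiteNF e idx) :
    IsTSequenceFor φ.ker (fun j : Fin m => (List.ofFn fun i : Fin n => g i ^ e j i).prod) := by
  classical
  obtain ⟨htop, hnorm0, hcent0, hord⟩ := hg
  obtain ⟨idx, hsm, hlow, hpiv, _hoff⟩ := hnf
  set k : Fin m → G := fun j : Fin m => (List.ofFn fun i : Fin n => g i ^ e j i).prod with hkdef
  have hnorm : ∀ i : ℕ, ∀ x y : G, y ∈ tchain g i → x * y * x⁻¹ ∈ tchain g i :=
    fun i x y hy => hnorm0 i x (Subgroup.mem_top x) y hy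
  have hcent : ∀ i : ℕ, i < n → ∀ x y : G, y ∈ tchain g i →
      x * y * x⁻¹ * y⁻¹ ∈ tchain g (i + 1) :=
    fun i hi x y hy => hcent0 i hi x (Subgroup.mem_top x) y hy
  have hNormal : ∀ i : ℕ, (tchain g i).Normal := fun i => ⟨fun y hy x => hnorm i x y hy⟩
  have hkpp : ∀ j, k j = pp g (e j) 0 := fun j => by
    rw [hkdef]; unfold pp; rw [List.drop_zero]
  have hkernel : ∀ j, k j ∈ φ.ker := fun j => by
    rw [MonoidHom.mem_ker, hkpp, phi_pp]; exact hrel j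
  have hkG : ∀ j, k j ∈ tchain g ((idx j : ℕ)) := by
    intro j
    rw [hkpp, pp_zero_prefix g (e j) (idx j) (fun l hl => hlow j l hl)]
    exact pp_mem_tchain g (e j) (idx j)
  have hkdecomp : ∀ j, k j = g (idx j) ^ e j (idx j) * pp g (e j) ((idx j : ℕ) + 1) := by
    intro j
    rw [hkpp, pp_zero_prefix g (e j) (idx j) (fun l hl => hlow j l hl),
      pp_succ g (e j) (idx j) (idx j).isLt]
  -- Main lemma
  have main : ∀ i : ℕ, ∀ t : ℕ, (∀ j : Fin m, ((j : ℕ) < t ↔ (idx j : ℕ) < i)) →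
      ∀ x, x ∈ φ.ker → x ∈ tchain g i → x ∈ tchain k t := by
    refine downInd n _ ?_ ?_
    · intro i hi t _ x _ hx
      rw [tchain_bot g hi, Subgroup.mem_bot] at hx
      rw [hx]; exact one_mem _
    · intro i hi ih t hlink x hxker hxG
      obtain ⟨a, ha0, hxa⟩ := exists_nf g hnorm i x hxG
      have hx0 : x = pp g a 0 := by
        rw [hxa]; exact (pp_zero_prefix g a i ha0).symm
      have hφa : ∏ l : Fin n, φ (g l) ^ a l = 1 := by
        rw [← phi_pp φ g a, ← hx0]; exact MonoidHom.mem_ker.mp hxker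
      obtain ⟨c, hc⟩ := (Submodule.mem_span_range_iff_exists_fun ℤ).mp (hgen a hφa)
      have hcz : ∀ j : Fin m, (idx j : ℕ) < i → c j = 0 := by
        have key : ∀ N : ℕ, ∀ j : Fin m, (j : ℕ) < N → (idx j : ℕ) < i → c j = 0 := by
          intro N
          induction N with
          | zero => intro j hj; omega
          | succ N ihN =>
            intro j hj hji
            have h1 := congrFun hc (idx j)
            simp only [Finset.sum_apply, Pi.smul_apply, smul_eq_mul] at h1
            rw [ha0 (idx j) hji] at h1
            rw [Finset.sum_eq_single j ?_ (fun h => absurd (Finset.mem_univ j) h)] at h1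
            · rcases mul_eq_zero.mp h1 with h | h
              · exact h
              · exact absurd h (by have := hpiv j; omega)
            · intro b _ hbj
              rcases lt_or_gt_of_ne hbj with hb | hb
              · rw [ihN b (by have := Fin.lt_def.mp hb; omega)
                  (by have := Fin.lt_def.mp (hsm hb); omega), zero_mul]
              · rw [hlow b (idx j) (Fin.lt_def.mp (hsm hb)), mul_zero]
        intro j hji; exact key ((j : ℕ) + 1) j (by omega) hji
      obtain ⟨t', htt', hlink'⟩ : ∃ t', t ≤ t' ∧
          ∀ j : Fin m, ((j : ℕ) < t' ↔ (idx j : ℕ) < i + 1) := by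
        by_cases hT : ∃ hm : t < m, (idx ⟨t, hm⟩ : ℕ) = i
        · obtain ⟨hm, hϑ⟩ := hT
          refine ⟨t + 1, by omega, fun j => ?_⟩
          constructor
          · intro hj
            rcases Nat.lt_succ_iff_lt_or_eq.mp hj with h | h
            · have := (hlink j).mp h; omega
            · have : j = ⟨t, hm⟩ := Fin.ext h
              rw [this, hϑ]; omega
          · intro hj
            rcases Nat.lt_succ_iff_lt_or_eq.mp hj with h | h
            · exact Nat.lt_succ_of_lt ((hlink j).mpr h)
            · have hje : idx j = idx ⟨t, hm⟩ := Fin.ext (by rw [hϑ]; exact h)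
              have h2 : (j : ℕ) = t := by rw [hsm.injective hje]
              omega
        · refine ⟨t, le_rfl, fun j => ?_⟩
          rw [hlink j]
          constructor
          · omega
          · intro hj
            rcases Nat.lt_succ_iff_lt_or_eq.mp hj with h | h
            · exact h
            · exfalso
              have hjt : ¬ ((j : ℕ) < t) := fun hc' => by
                have := (hlink j).mp hc'; omega
              have htm : t < m := by have := j.isLt; omega
              have h1 : ¬ ((idx ⟨t, htm⟩ : ℕ) < i) := fun hc' => by
                have := (hlink ⟨t, htm⟩).mpr hc'; simp at this
              have h2 : (idx ⟨t, htm⟩ : ℕ) ≤ (idx j : ℕ) := by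
                have : (⟨t, htm⟩ : Fin m) ≤ j := by
                  rw [Fin.le_def]; simpa using not_lt.mp hjt
                exact hsm.monotone this
              exact hT ⟨htm, by omega⟩
      set y := pp k c t with hydef
      have hyk : y ∈ tchain k t := pp_mem_tchain k c t
      have hyker : y ∈ φ.ker := pp_mem k φ.ker c t fun j _ => hkernel j
      set σ : Fin n := ⟨i, hi⟩ with hσ
      set N := tchain g (i + 1) with hNdef
      haveI : N.Normal := hNormal (i + 1)
      set π := QuotientGroup.mk' N with hπ
      have hkerN : π.ker = N := QuotientGroup.ker_mk' N
      have hπone : ∀ z : G, z ∈ N → π z = 1 := by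
        intro z hz
        rw [← MonoidHom.mem_ker, hkerN]; exact hz
      have hπk : ∀ j : Fin m, π (k j ^ c j) = π (g σ) ^ (c j * e j σ) := by
        intro j
        rcases lt_trichotomy ((idx j : ℕ)) i with h | h | h
        · rw [hcz j h]; simp
        · have hidx : idx j = σ := Fin.ext h
          have hin : pp g (e j) ((idx j : ℕ) + 1) ∈ N := by
            rw [hNdef, ← h]; exact pp_mem_tchain g (e j) _
          have : π (k j) = π (g σ) ^ (e j σ) := by
            rw [hkdecomp j, map_mul, map_zpow, hπone _ hin,
              mul_one, hidx]
          rw [map_zpow, this, ← zpow_mul, mul_comm]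
        · have h1 : k j ∈ N := tchain_mono g (by omega) (hkG j)
          have h2 : e j σ = 0 := hlow j σ (by simpa [hσ] using h)
          rw [h2, mul_zero, zpow_zero, map_zpow, hπone _ h1,
            one_zpow]
      have hπy : π y = π (g σ) ^ (a σ) := by
        have hy0 : y = pp k c 0 := by
          rw [hydef]
          exact (pp_zero_prefix k c t fun j hj => hcz j ((hlink j).mp hj)).symm
        have h1 : π y = (List.ofFn fun j : Fin m => π (g σ) ^ (c j * e j σ)).prod := by
          rw [hy0]; unfold pp; rw [List.drop_zero, map_list_prod, List.map_ofFn]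
          exact congrArg List.prod (congrArg List.ofFn (funext fun j => hπk j))
        rw [h1, prod_ofFn_zpow]
        congr 1
        have h2 := congrFun hc σ
        simp only [Finset.sum_apply, Pi.smul_apply, smul_eq_mul] at h2
        exact h2
      have hπx : π x = π (g σ) ^ (a σ) := by
        rw [hxa, pp_succ g a i hi, map_mul, map_zpow,
          hπone _ (pp_mem_tchain g a (i + 1)), mul_one]
      have hyx : y⁻¹ * x ∈ N := by
        rw [← hkerN, MonoidHom.mem_ker, map_mul, map_inv, hπy, hπx, inv_mul_cancel]
      have hyxk : y⁻¹ * x ∈ tchain k t' :=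
        ih t' hlink' _ (mul_mem (inv_mem hyker) hxker) hyx
      have := mul_mem hyk (tchain_mono k htt' hyxk)
      simpa using this
  -- characterization of tchain k
  have char : ∀ s : ℕ,
      tchain k s = φ.ker ⊓ tchain g (if h : s < m then (idx ⟨s, h⟩ : ℕ) else n) := by
    intro s
    apply le_antisymm
    · rw [tchain, Subgroup.closure_le]
      rintro x ⟨j, hj, rfl⟩
      have hd : (if h : s < m then (idx ⟨s, h⟩ : ℕ) else n) ≤ (idx j : ℕ) := by
        split_ifs with h
        · exact hsm.monotone (by rw [Fin.le_def]; simpa using hj)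
        · have := j.isLt; omega
      exact Subgroup.mem_inf.mpr ⟨hkernel j, tchain_mono g hd (hkG j)⟩
    · intro x hx
      rw [Subgroup.mem_inf] at hx
      refine main _ s ?_ x hx.1 hx.2
      intro j
      split_ifs with h
      · constructor
        · intro hj; exact Fin.lt_def.mp (hsm (Fin.lt_def.mpr (by simpa using hj)))
        · intro hj
          have : j < (⟨s, h⟩ : Fin m) := hsm.lt_iff_lt.mp (Fin.lt_def.mpr hj)
          simpa using Fin.lt_def.mp this
      · have h1 := j.isLt
        have h2 := (idx j).isLt
        constructor <;> (intro; omega)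
  refine ⟨?_, ?_, ?_, ?_⟩
  · apply le_antisymm
    · rw [tchain, Subgroup.closure_le]
      rintro x ⟨j, _, rfl⟩
      exact hkernel j
    · intro x hx
      refine main 0 0 (fun j => by omega) x hx ?_
      rw [htop]; exact Subgroup.mem_top x
  · intro s x hx y hy
    rw [char s] at hy ⊢
    rw [Subgroup.mem_inf] at hy ⊢
    refine ⟨?_, hnorm _ x y hy.2⟩
    rw [MonoidHom.mem_ker] at hx ⊢
    simp [map_mul, hx, MonoidHom.mem_ker.mp hy.1]
  · intro s hs x hx y hy
    rw [char s, Subgroup.mem_inf, dif_pos hs] at hy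
    have h1 : x * y * x⁻¹ * y⁻¹ ∈ tchain g ((idx ⟨s, hs⟩ : ℕ) + 1) :=
      hcent _ (idx ⟨s, hs⟩).isLt x y hy.2
    have h2 : x * y * x⁻¹ * y⁻¹ ∈ φ.ker := by
      rw [MonoidHom.mem_ker] at hx ⊢
      have hy1 := MonoidHom.mem_ker.mp hy.1
      simp [map_mul, hx, hy1]
    refine main ((idx ⟨s, hs⟩ : ℕ) + 1) (s + 1) ?_ _ h2 h1
    intro j
    constructor
    · intro hj
      have : j ≤ (⟨s, hs⟩ : Fin m) := by rw [Fin.le_def]; simpa using Nat.lt_succ_iff.mp hj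
      have := hsm.monotone this
      rw [Fin.le_def] at this; omega
    · intro hj
      have : idx j ≤ idx ⟨s, hs⟩ := by rw [Fin.le_def]; omega
      have := hsm.le_iff_le.mp this
      rw [Fin.le_def] at this; simp at this; omega
  · intro j c hc
    have h1 : tchain k ((j : ℕ) + 1) ≤ tchain g ((idx j : ℕ) + 1) := by
      rw [char ((j : ℕ) + 1)]
      refine le_trans inf_le_right (tchain_mono g ?_)
      split_ifs with h
      · have : idx j < idx ⟨(j : ℕ) + 1, h⟩ := hsm (by rw [Fin.lt_def]; simp)
        rw [Fin.lt_def] at this; omega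
      · exact (idx j).isLt
    have h3 : k j ^ c ∈ tchain g ((idx j : ℕ) + 1) := h1 hc
    haveI : (tchain g ((idx j : ℕ) + 1)).Normal := hNormal _
    set π2 := QuotientGroup.mk' (tchain g ((idx j : ℕ) + 1)) with hπ2
    have hker2 : π2.ker = tchain g ((idx j : ℕ) + 1) := QuotientGroup.ker_mk' _
    have hπ2one : ∀ z : G, z ∈ tchain g ((idx j : ℕ) + 1) → π2 z = 1 := by
      intro z hz
      rw [← MonoidHom.mem_ker, hker2]; exact hz
    have h4 : π2 (k j) = π2 (g (idx j)) ^ (e j (idx j)) := by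
      rw [hkdecomp j, map_mul, map_zpow,
        hπ2one _ (pp_mem_tchain g (e j) _), mul_one]
    have h5 : π2 (g (idx j)) ^ (e j (idx j) * c) = 1 := by
      rw [zpow_mul, ← h4, ← map_zpow]
      exact hπ2one _ h3
    have h6 : g (idx j) ^ (e j (idx j) * c) ∈ tchain g ((idx j : ℕ) + 1) := by
      rw [← hker2, MonoidHom.mem_ker, map_zpow]; exact h5
    have h7 := hord (idx j) (e j (idx j) * c) h6
    rcases mul_eq_zero.mp h7 with h | h
    · exact absurd h (by have := hpiv j; omega)
    · exact h
end
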